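/- arXiv:1912.12552 — 3 statements merged into one kernel-verified Lean document; each statement's English description precedes it below -/
import Mathlib

section
/- For all c > 0 and a, b ∈ ℝ, the absolute value of (2π)^{-1/2} ∫_ℝ e^{i k b} e^{-k²(c + i a)} dk equals e^{-c b²/(4(a²+c²))} / (4(a²+c²))^{1/4}. -/
/-!
Mathlib's Gaussian Fourier integral gives `(π / z) ^ (1/2) * exp (-b² / (4 z))` with
`z = c + i a`. Taking norms, `‖(π / z) ^ (1/2)‖ = √(π / ‖z‖)` and `‖exp w‖ = exp (re w)` with
`re (-b² / (4 z)) = -c b² / (4 ‖z‖²)`; since `‖z‖² = a² + c²`, the constants combine to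
`(4 (a² + c²)) ^ (-1/4)`.
-/

open Complex

lemma re_neg_sq_div_four_mul (t : ℝ) (z : ℂ) :
    (-(t : ℂ) ^ 2 / (4 * z)).re = -(z.re * t ^ 2) / (4 * ‖z‖ ^ 2) := by
  rw [div_re, ← normSq_eq_norm_sq]
  simp only [← ofReal_pow, neg_re, ofReal_re, mul_re, re_ofNat, im_ofNat, zero_mul, sub_zero,
    neg_mul, normSq_mul, normSq_ofNat, neg_im, ofReal_im, neg_zero, mul_im, add_zero, zero_div]
  ring

lemma norm_integral_cexp_mul_cexp_neg_sq_mul {z : ℂ} (hz : 0 < z.re) (t : ℝ) :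
    ‖∫ k : ℝ, cexp (I * k * t) * cexp (-(k : ℂ) ^ 2 * z)‖ =
      √(Real.pi / ‖z‖) * Real.exp (-(z.re * t ^ 2) / (4 * ‖z‖ ^ 2)) := by
  have hintegrand : (fun k : ℝ ↦ cexp (I * k * t) * cexp (-(k : ℂ) ^ 2 * z)) =
      fun k : ℝ ↦ cexp (I * t * k) * cexp (-z * k ^ 2) := by
    ext k; ring_nf
  rw [hintegrand, fourierIntegral_gaussian hz, norm_mul, norm_exp, re_neg_sq_div_four_mul,
    show (1 / 2 : ℂ) = ((1 / 2 : ℝ) : ℂ) by norm_num, norm_cpow_real, norm_div, norm_real,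
    Real.norm_of_nonneg Real.pi_pos.le, Real.sqrt_eq_rpow]

lemma sqrt_pi_div_div_sqrt_two_pi {r : ℝ} (hr : 0 ≤ r) :
    √(Real.pi / r) / √(2 * Real.pi) = ((4 * r ^ 2) ^ ((1 : ℝ) / 4))⁻¹ := by
  have hfourth_root : (4 * r ^ 2) ^ ((1 : ℝ) / 4) = √(2 * r) := by
    rw [show 4 * r ^ 2 = (2 * r) ^ (2 : ℝ) by norm_num; ring, ← Real.rpow_mul (by positivity),
      Real.sqrt_eq_rpow]
    norm_num
  rw [hfourth_root, ← Real.sqrt_div' _ (by positivity), ← Real.sqrt_inv]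
  congr 1
  field_simp

/-- For `c > 0` and `a, b ∈ ℝ`, the absolute value of
`(2π)^{-1/2} ∫_ℝ e^{ikb} e^{-k²(c+ia)} dk` equals
`e^{-cb²/(4(a²+c²))} / (4(a²+c²))^{1/4}`. -/
theorem abs_gaussian_fourier (a b c : ℝ) (hc : 0 < c) :
    ‖((1 / Real.sqrt (2 * Real.pi) : ℝ) *
        ∫ k : ℝ, Complex.exp (Complex.I * k * b) *
          Complex.exp (-(k : ℂ) ^ 2 * (c + Complex.I * a)))‖ =
      Real.exp (-(c * b ^ 2) / (4 * (a ^ 2 + c ^ 2))) /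
        (4 * (a ^ 2 + c ^ 2)) ^ ((1 : ℝ) / 4) := by
  have hre : ((c : ℂ) + I * a).re = c := by simp
  have hnorm_sq : ‖(c : ℂ) + I * a‖ ^ 2 = a ^ 2 + c ^ 2 := by
    rw [← normSq_eq_norm_sq, normSq_apply]
    simp only [add_re, add_im, ofReal_re, ofReal_im, mul_re, mul_im, I_re, I_im]
    ring
  rw [norm_mul, norm_integral_cexp_mul_cexp_neg_sq_mul (hre.symm ▸ hc), norm_real,
    Real.norm_of_nonneg (by positivity), ← mul_assoc, one_div_mul_eq_div,
    sqrt_pi_div_div_sqrt_two_pi (norm_nonneg _), hnorm_sq, hre]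
  ring
end

section
/- For η > 0 and y > 0, the modified Bessel function of the second kind satisfies 0 ≤ K_η(y) ≤ (4^η / y^η) e^{-y/4} Γ(η). -/
open MeasureTheory Real

/-- The modified Bessel function of the second kind,
`K_η(y) = ∫_0^∞ e^{-y cosh t} cosh(η t) dt`. -/
noncomputable def besselK (η y : ℝ) : ℝ :=
  ∫ t in Set.Ioi (0 : ℝ), Real.exp (-(y * Real.cosh t)) * Real.cosh (η * t)

/-!
For `t ≥ 0` we have `y cosh t ≥ y/4 + (y/4) eᵗ` and `cosh (η t) ≤ e^{η t}`, so with
`c = y/4` the integrand of `K_η(y)` is at most `e^{-c} · e^{η t} e^{-c eᵗ}`. The substitution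
`u = eᵗ` turns the integral of the latter over `t > 0` into
`∫_1^∞ u^{η-1} e^{-c u} du ≤ c^{-η} Γ(η)`.
-/

namespace Real

theorem cosh_le_exp_of_nonneg {x : ℝ} (hx : 0 ≤ x) : cosh x ≤ exp x := by
  rw [cosh_eq]
  linarith [exp_le_exp.2 (show -x ≤ x by linarith)]

theorem one_add_exp_le_four_mul_cosh {t : ℝ} (ht : 0 ≤ t) : 1 + exp t ≤ 4 * cosh t := by
  rw [cosh_eq]
  linarith [one_le_exp ht, exp_pos (-t)]

end Real

theorem setIntegral_comp_exp_Ioi_zero_le {g : ℝ → ℝ} (hg : IntegrableOn g (Set.Ioi 0))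
    (hg_nonneg : ∀ u ∈ Set.Ioi (0 : ℝ), 0 ≤ g u) :
    ∫ t in Set.Ioi (0 : ℝ), exp t * g (exp t) ≤ ∫ u in Set.Ioi (0 : ℝ), g u := by
  have h := integral_comp_exp_Ioi g 0
  simp only [smul_eq_mul, exp_zero] at h
  rw [h]
  exact setIntegral_mono_set hg (ae_restrict_of_forall_mem measurableSet_Ioi hg_nonneg)
    (Set.Ioi_subset_Ioi zero_le_one).eventuallyLE

theorem besselK_nonneg (η y : ℝ) : 0 ≤ besselK η y :=
  setIntegral_nonneg measurableSet_Ioi fun _ _ => mul_nonneg (exp_pos _).le (cosh_pos _).le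

theorem exp_neg_mul_cosh_mul_cosh_le {η y t : ℝ} (hη : 0 ≤ η) (hy : 0 ≤ y) (ht : 0 ≤ t) :
    exp (-(y * cosh t)) * cosh (η * t)
      ≤ exp (-(y / 4)) * (exp t * (exp t ^ (η - 1) * exp (-(y / 4 * exp t)))) := by
  have hexp : exp t * exp t ^ (η - 1) = exp (η * t) := by
    rw [← exp_mul, ← exp_add]
    ring_nf
  have hcosh : -(y * cosh t) ≤ -(y / 4) + -(y / 4 * exp t) := by
    nlinarith [one_add_exp_le_four_mul_cosh ht]
  calc exp (-(y * cosh t)) * cosh (η * t)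
      ≤ exp (-(y / 4) + -(y / 4 * exp t)) * exp (η * t) :=
        mul_le_mul (exp_le_exp.2 hcosh) (cosh_le_exp_of_nonneg (by positivity))
          (cosh_pos _).le (exp_pos _).le
    _ = exp (-(y / 4)) * (exp t * (exp t ^ (η - 1) * exp (-(y / 4 * exp t)))) := by
        rw [exp_add, ← hexp]
        ring

theorem besselK_le {η y : ℝ} (hη : 0 < η) (hy : 0 < y) :
    besselK η y ≤ exp (-(y / 4)) * ((1 / (y / 4)) ^ η * Gamma η) := by
  set g : ℝ → ℝ := fun u => u ^ (η - 1) * exp (-(y / 4 * u))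
  have hg : IntegrableOn g (Set.Ioi 0) := by
    simpa [g, rpow_one, neg_mul, sub_add_cancel] using
      integrableOn_rpow_mul_exp_neg_mul_rpow (s := η - 1) (p := 1) (b := y / 4)
        (by linarith) one_pos (by positivity)
  have hg_nonneg : ∀ u ∈ Set.Ioi (0 : ℝ), 0 ≤ g u := fun u hu =>
    mul_nonneg (rpow_nonneg (le_of_lt hu) _) (exp_pos _).le
  have hg_exp : IntegrableOn (fun t => exp t * g (exp t)) (Set.Ioi 0) := by
    simpa only [smul_eq_mul] using
      (integrableOn_comp_exp_Ioi g 0).2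
        (by simpa using hg.mono_set (Set.Ioi_subset_Ioi zero_le_one))
  calc besselK η y ≤ ∫ t in Set.Ioi (0 : ℝ), exp (-(y / 4)) * (exp t * g (exp t)) := by
        refine integral_mono_of_nonneg
          (ae_restrict_of_forall_mem measurableSet_Ioi fun _ _ =>
            mul_nonneg (exp_pos _).le (cosh_pos _).le)
          (hg_exp.const_mul _) (ae_restrict_of_forall_mem measurableSet_Ioi fun t ht => ?_)
        exact exp_neg_mul_cosh_mul_cosh_le hη.le hy.le (le_of_lt ht)
    _ ≤ exp (-(y / 4)) * ∫ u in Set.Ioi (0 : ℝ), g u := by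
        rw [integral_const_mul]
        exact mul_le_mul_of_nonneg_left (setIntegral_comp_exp_Ioi_zero_le hg hg_nonneg)
          (exp_pos _).le
    _ = exp (-(y / 4)) * ((1 / (y / 4)) ^ η * Gamma η) := by
        rw [integral_rpow_mul_exp_neg_mul_Ioi hη (by positivity)]

/-- For `η > 0` and `y > 0`, `0 ≤ K_η(y) ≤ (4^η / y^η) e^{-y/4} Γ(η)`. -/
theorem besselK_nonneg_and_le (η y : ℝ) (hη : 0 < η) (hy : 0 < y) :
    0 ≤ besselK η y ∧
      besselK η y ≤ (4 ^ η / y ^ η) * Real.exp (-y / 4) * Real.Gamma η := by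
  refine ⟨besselK_nonneg η y, (besselK_le hη hy).trans_eq ?_⟩
  rw [one_div_div, div_rpow (by norm_num) hy.le, neg_div]
  ring
end

section
/- Let G_a(x) = e^{-a|x|} on ℝ^d with a > 0. There exists a constant D₃ > 0 depending only on d such that for every n ≥ 2, the (n-1)-fold convolution satisfies (G_a * G_a * ⋯ * G_a)(x) ≤ (D₃/a^d)^n · a^d · e^{-a|x|/4} for all x ∈ ℝ^d. -/
/-!
The pointwise inequality `|x|/4 + |z| ≥ |x - z|/4 + 3|z|/4` (triangle inequality) shows by
induction that every further convolution with `G_a` keeps the factor `e^{-a|x|/4}` at the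
cost of a factor `∫ e^{-3a|z|/4} dz = (4/3)^d a^{-d} ∫ e^{-|z|} dz`, a constant over `a^d`
by scaling.
-/

open MeasureTheory Real

/-- `iterConv d a n` is the convolution of `n + 1` copies of `G_a(x) = e^{-a|x|}` on `ℝ^d`
(i.e. `n` convolutions). -/
noncomputable def iterConv (d : ℕ) (a : ℝ) : ℕ → (EuclideanSpace ℝ (Fin d) → ℝ)
  | 0 => fun x => Real.exp (-(a * ‖x‖))
  | n + 1 => fun x => ∫ z : EuclideanSpace ℝ (Fin d),
      iterConv d a n (x - z) * Real.exp (-(a * ‖z‖))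

open Nat in
theorem exp_neg_mul_le_mul_one_add_rpow_neg {c t : ℝ} (hc : 0 < c) (ht : 0 ≤ t) (N : ℕ) :
    exp (-(c * t)) ≤ exp c * N ! / c ^ N * (1 + t) ^ (-(N : ℝ)) := by
  have hpow : (c * (1 + t)) ^ N / N ! ≤ exp (c * (1 + t)) :=
    pow_div_factorial_le_exp _ (by positivity) N
  rw [rpow_neg (by positivity), rpow_natCast, show -(c * t) = c - c * (1 + t) by ring, exp_sub,
    mul_pow] at *
  rw [div_le_iff₀ (by positivity)] at hpow
  rw [div_le_iff₀ (exp_pos _)]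
  field_simp
  rwa [mul_comm (1 + t), mul_comm (N ! : ℝ)]

section

open Module

variable {E : Type*} [NormedAddCommGroup E] [NormedSpace ℝ E] [FiniteDimensional ℝ E]
  [MeasurableSpace E] [BorelSpace E] (μ : Measure E) [μ.IsAddHaarMeasure]

theorem integrable_exp_neg_mul_norm {c : ℝ} (hc : 0 < c) :
    Integrable (fun x : E => exp (-(c * ‖x‖))) μ := by
  set N := finrank ℝ E + 1
  refine ((integrable_one_add_norm (μ := μ) (r := N) (by simp [N])).const_mul
    (exp c * N.factorial / c ^ N)).mono' (by fun_prop) (.of_forall fun x => ?_)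
  rw [norm_of_nonneg (exp_pos _).le]
  exact exp_neg_mul_le_mul_one_add_rpow_neg hc (norm_nonneg x) N

theorem integral_exp_neg_mul_norm {c : ℝ} (hc : 0 ≤ c) :
    ∫ x : E, exp (-(c * ‖x‖)) ∂μ = (c ^ finrank ℝ E)⁻¹ * ∫ x : E, exp (-‖x‖) ∂μ := by
  rw [← smul_eq_mul,
    ← Measure.integral_comp_smul_of_nonneg μ (fun x : E => exp (-‖x‖)) c (hR := hc)]
  simp [norm_smul, abs_of_nonneg hc]

end

theorem exp_neg_norm_sub_div_four_mul_exp_neg_norm_le {E : Type*} [SeminormedAddCommGroup E]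
    {a : ℝ} (ha : 0 ≤ a) (x z : E) :
    exp (-(a * ‖x - z‖) / 4) * exp (-(a * ‖z‖)) ≤
      exp (-(a * ‖x‖) / 4) * exp (-(3 * a / 4 * ‖z‖)) := by
  rw [← exp_add, ← exp_add, exp_le_exp]
  nlinarith [norm_nonneg z, mul_le_mul_of_nonneg_left (norm_sub_norm_le x z) ha]

theorem iterConv_nonneg (d : ℕ) (a : ℝ) (n : ℕ) (x : EuclideanSpace ℝ (Fin d)) :
    0 ≤ iterConv d a n x := by
  induction n generalizing x with
  | zero => exact (exp_pos _).le
  | succ n ih => exact integral_nonneg fun z => mul_nonneg (ih _) (exp_pos _).le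

theorem iterConv_le_pow_mul_exp (d : ℕ) {a : ℝ} (ha : 0 < a) (n : ℕ)
    (x : EuclideanSpace ℝ (Fin d)) :
    iterConv d a n x ≤
      ((4 / 3) ^ d * (∫ z : EuclideanSpace ℝ (Fin d), exp (-‖z‖)) / a ^ d) ^ n
        * exp (-(a * ‖x‖) / 4) := by
  set K := (4 / 3) ^ d * (∫ z : EuclideanSpace ℝ (Fin d), exp (-‖z‖)) / a ^ d with hK_def
  have hK : ∫ z : EuclideanSpace ℝ (Fin d), exp (-(3 * a / 4 * ‖z‖)) = K := by
    rw [integral_exp_neg_mul_norm _ (by positivity), finrank_euclideanSpace_fin, hK_def,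
      div_pow, mul_pow, div_pow]
    field_simp
  induction n generalizing x with
  | zero =>
    simp only [iterConv, pow_zero, one_mul, exp_le_exp]
    nlinarith [norm_nonneg x]
  | succ n ih =>
    calc iterConv d a (n + 1) x
        ≤ ∫ z, K ^ n * (exp (-(a * ‖x‖) / 4) * exp (-(3 * a / 4 * ‖z‖))) := by
          refine integral_mono_of_nonneg (.of_forall fun z =>
              mul_nonneg (iterConv_nonneg d a n _) (exp_pos _).le)
            ((integrable_exp_neg_mul_norm _ (by positivity)).const_mul _ |>.const_mul _)
            (.of_forall fun z => ?_)
          beta_reduce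
          grw [ih, mul_assoc, exp_neg_norm_sub_div_four_mul_exp_neg_norm_le ha.le]
      _ = K ^ (n + 1) * exp (-(a * ‖x‖) / 4) := by
          rw [integral_const_mul, integral_const_mul, hK]
          ring

theorem iterConv_exp_le_general (d : ℕ) :
    ∃ D₃ : ℝ, 0 < D₃ ∧ ∀ a : ℝ, 0 < a → ∀ n : ℕ, 2 ≤ n → ∀ x : EuclideanSpace ℝ (Fin d),
      iterConv d a (n - 1) x ≤ (D₃ / a ^ d) ^ n * a ^ d * Real.exp (-(a * ‖x‖) / 4) := by
  set B := (4 / 3 : ℝ) ^ d * ∫ z : EuclideanSpace ℝ (Fin d), exp (-‖z‖)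
  have hB : 0 ≤ B := by positivity
  refine ⟨B + 1, by positivity, fun a ha n hn x => ?_⟩
  obtain ⟨m, rfl⟩ : ∃ m, n = m + 1 := ⟨n - 1, by omega⟩
  calc iterConv d a (m + 1 - 1) x
      ≤ (B / a ^ d) ^ m * exp (-(a * ‖x‖) / 4) := iterConv_le_pow_mul_exp d ha m x
    _ ≤ ((B + 1) / a ^ d) ^ m * (B + 1) * exp (-(a * ‖x‖) / 4) := by
        gcongr ?_ * _
        calc (B / a ^ d) ^ m ≤ ((B + 1) / a ^ d) ^ m := by gcongr; linarith
          _ ≤ ((B + 1) / a ^ d) ^ m * (B + 1) :=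
            le_mul_of_one_le_right (by positivity) (by linarith)
    _ = ((B + 1) / a ^ d) ^ (m + 1) * a ^ d * exp (-(a * ‖x‖) / 4) := by
        rw [pow_succ, mul_assoc _ (_ / _), div_mul_cancel₀ _ (by positivity)]

/-- Let `G_a(x) = e^{-a|x|}` on `ℝ^d`, `a > 0`. There is a constant `D₃ > 0` depending only
on `d` such that for every `n ≥ 2` the `(n−1)`-fold convolution of `n` copies of `G_a`
satisfies `(G_a * ⋯ * G_a)(x) ≤ (D₃/a^d)^n a^d e^{-a|x|/4}`. -/
theorem iterConv_exp_le (d : ℕ) (hd : 1 ≤ d) :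
    ∃ D₃ : ℝ, 0 < D₃ ∧ ∀ a : ℝ, 0 < a → ∀ n : ℕ, 2 ≤ n → ∀ x : EuclideanSpace ℝ (Fin d),
      iterConv d a (n - 1) x ≤ (D₃ / a ^ d) ^ n * a ^ d * Real.exp (-(a * ‖x‖) / 4) :=
  iterConv_exp_le_general d
end
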